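/- Every regular solution of the forced inviscid dyadic model satisfies the energy equality: if {a_j} is a solution on [0,T] with Σ_{j≥0} a_j(0)² < ∞ and sup_{t∈[0,T]} ‖a(t)‖_{H^{θ/3}} < ∞, then for all t ∈ [0,T], Σ_{j≥0} a_j(t)² = Σ_{j≥0} a_j(0)² + 2 f_0 ∫_0^t a_0(τ) dτ. -/

import Mathlib

open MeasureTheory Filter
open scoped ENNReal

/-- The (possibly infinite) squared `H^s` norm of a sequence, with `λ_j = lam ^ j`:
`‖a‖_{H^s}² = Σ_j λ_j^{2s} a_j²`. -/
noncomputable def Hsq (lam s : ℝ) (a : ℕ → ℝ) : ℝ≥0∞ :=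
  ∑' j : ℕ, ENNReal.ofReal ((lam ^ j) ^ (2 * s) * (a j) ^ 2)

/-- A solution of the forced inviscid dyadic model on `[0,T]`:
`a_j' = λ_j^θ a_{j-1}² − λ_{j+1}^θ a_j a_{j+1} + f_j`, with `a_{-1} ≡ 0`,
`f_0 = f0 > 0` and `f_j = 0` for `j ≥ 1`. -/
def IsForcedSolOn (lam θ f0 T : ℝ) (a : ℕ → ℝ → ℝ) : Prop :=
  ∀ j : ℕ, ∀ t ∈ Set.Icc (0 : ℝ) T,
    HasDerivWithinAt (a j)
      ((lam ^ j) ^ θ * (if j = 0 then (0 : ℝ) else a (j - 1) t) ^ 2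
        - (lam ^ (j + 1)) ^ θ * a j t * a (j + 1) t
        + (if j = 0 then f0 else 0)) (Set.Icc 0 T) t

open Set Topology

/-! Multiplying the `j`-th equation by `2 a_j` and summing over `j ≤ N`, the nonlinear terms
telescope: `d/dt Σ_{j ≤ N} a_j² = 2 f₀ a₀ - 2 Π_N` with the flux
`Π_N = λ_{N+1}^θ a_N² a_{N+1}`. Splitting `λ_{N+1}^θ = λ^{2θ/3} λ_N^{2θ/3} λ_{N+1}^{θ/3}` bounds
`|Π_N| ≤ λ^{2θ/3} ‖a‖_{H^{θ/3}} λ_N^{2θ/3} a_N²`, so by regularity the flux is bounded on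
`[0,T]` uniformly in `N` and tends to `0` pointwise. Integrating in time and letting `N → ∞`
by bounded convergence gives the energy equality. -/

section WeightedNorm

variable {lam s : ℝ} {x : ℕ → ℝ}

lemma Hsq_term_nonneg (hlam : 0 ≤ lam) (x : ℕ → ℝ) (j : ℕ) :
    0 ≤ (lam ^ j) ^ (2 * s) * x j ^ 2 :=
  mul_nonneg (Real.rpow_nonneg (pow_nonneg hlam j) _) (sq_nonneg _)

lemma summable_Hsq_term (hlam : 0 ≤ lam) (h : Hsq lam s x ≠ ⊤) :
    Summable fun j => (lam ^ j) ^ (2 * s) * x j ^ 2 :=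
  (ENNReal.summable_toReal h).congr fun j => ENNReal.toReal_ofReal (Hsq_term_nonneg hlam x j)

lemma Hsq_term_le_toReal {M : ℝ≥0∞} (hM : M ≠ ⊤) (h : Hsq lam s x ≤ M) (j : ℕ) :
    (lam ^ j) ^ (2 * s) * x j ^ 2 ≤ M.toReal :=
  (ENNReal.ofReal_le_iff_le_toReal hM).mp ((ENNReal.le_tsum j).trans h)

lemma summable_sq_of_Hsq_ne_top (hlam : 1 ≤ lam) (hs : 0 ≤ s) (h : Hsq lam s x ≠ ⊤) :
    Summable fun j => x j ^ 2 :=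
  (summable_Hsq_term (zero_le_one.trans hlam) h).of_nonneg_of_le (fun j => sq_nonneg _)
    fun j => le_mul_of_one_le_left (sq_nonneg _)
      (Real.one_le_rpow (one_le_pow₀ hlam) (by positivity))

lemma rpow_mul_abs_le_sqrt {B y : ℝ} (hlam : 0 ≤ lam) {j : ℕ}
    (h : (lam ^ j) ^ (2 * s) * y ^ 2 ≤ B) : (lam ^ j) ^ s * |y| ≤ √B := by
  apply Real.le_sqrt_of_sq_le
  rwa [mul_pow, sq_abs, ← Real.rpow_mul_natCast (pow_nonneg hlam j), mul_comm s, Nat.cast_ofNat]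

end WeightedNorm

noncomputable def energyFlux (lam θ : ℝ) (x : ℕ → ℝ) (N : ℕ) : ℝ :=
  (lam ^ (N + 1)) ^ θ * x N ^ 2 * x (N + 1)

section Flux

variable {lam θ B : ℝ} {x : ℕ → ℝ}

lemma pow_succ_rpow_split (hlam : 0 < lam) (N : ℕ) :
    (lam ^ (N + 1)) ^ θ
      = lam ^ (2 * (θ / 3)) * (lam ^ N) ^ (2 * (θ / 3)) * (lam ^ (N + 1)) ^ (θ / 3) := by
  simp only [← Real.rpow_natCast_mul hlam.le, ← Real.rpow_add hlam]
  push_cast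
  ring_nf

lemma abs_energyFlux_le (hlam : 0 < lam)
    (hB : ∀ j, (lam ^ j) ^ (2 * (θ / 3)) * x j ^ 2 ≤ B) (N : ℕ) :
    |energyFlux lam θ x N|
      ≤ lam ^ (2 * (θ / 3)) * √B * ((lam ^ N) ^ (2 * (θ / 3)) * x N ^ 2) := by
  have hpos : ∀ (k : ℕ) (e : ℝ), 0 ≤ (lam ^ k) ^ e :=
    fun k e => Real.rpow_nonneg (pow_nonneg hlam.le k) e
  calc |energyFlux lam θ x N|
      = lam ^ (2 * (θ / 3)) * ((lam ^ N) ^ (2 * (θ / 3)) * x N ^ 2)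
          * ((lam ^ (N + 1)) ^ (θ / 3) * |x (N + 1)|) := by
        rw [energyFlux, abs_mul, abs_mul, abs_of_nonneg (hpos _ _), abs_of_nonneg (sq_nonneg _),
          pow_succ_rpow_split hlam]
        ring
    _ ≤ lam ^ (2 * (θ / 3)) * ((lam ^ N) ^ (2 * (θ / 3)) * x N ^ 2) * √B := by
        gcongr
        exact rpow_mul_abs_le_sqrt hlam.le (hB (N + 1))
    _ = _ := by ring

lemma tendsto_energyFlux_zero (hlam : 0 < lam)
    (hB : ∀ j, (lam ^ j) ^ (2 * (θ / 3)) * x j ^ 2 ≤ B)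
    (hsum : Summable fun j => (lam ^ j) ^ (2 * (θ / 3)) * x j ^ 2) :
    Tendsto (energyFlux lam θ x) atTop (𝓝 0) := by
  refine squeeze_zero_norm (abs_energyFlux_le hlam hB) ?_
  simpa using hsum.tendsto_atTop_zero.const_mul (lam ^ (2 * (θ / 3)) * √B)

end Flux

/-- `IsForcedSolOn` says that `a j` has derivative `forcedDyadicField lam θ f0 (a · t) j`
at `t`. -/
noncomputable def forcedDyadicField (lam θ f0 : ℝ) (x : ℕ → ℝ) (j : ℕ) : ℝ :=
  (lam ^ j) ^ θ * (if j = 0 then (0 : ℝ) else x (j - 1)) ^ 2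
    - (lam ^ (j + 1)) ^ θ * x j * x (j + 1) + (if j = 0 then f0 else 0)

lemma sum_mul_forcedDyadicField (lam θ f0 : ℝ) (x : ℕ → ℝ) (N : ℕ) :
    ∑ j ∈ Finset.range (N + 1), 2 * x j * forcedDyadicField lam θ f0 x j
      = 2 * f0 * x 0 - 2 * energyFlux lam θ x N := by
  induction N with
  | zero =>
    simp only [zero_add, Finset.sum_range_one, forcedDyadicField, energyFlux, ↓reduceIte]
    ring
  | succ N ih =>
    rw [Finset.sum_range_succ, ih]
    simp only [forcedDyadicField, energyFlux, Nat.succ_ne_zero, ↓reduceIte, Nat.add_sub_cancel]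
    ring

lemma integral_eq_sub_of_hasDerivWithinAt_Icc {f f' : ℝ → ℝ} {a b t : ℝ}
    (hderiv : ∀ x ∈ Icc a b, HasDerivWithinAt f (f' x) (Icc a b) x)
    (hint : IntervalIntegrable f' volume a t) (ht : t ∈ Icc a b) :
    ∫ x in a..t, f' x = f t - f a := by
  have hsub : Icc a t ⊆ Icc a b := Icc_subset_Icc_right ht.2
  refine intervalIntegral.integral_eq_sub_of_hasDeriv_right_of_le ht.1
    (fun x hx => (hderiv x (hsub hx)).continuousWithinAt.mono hsub) (fun x hx => ?_) hint
  exact (hderiv x (hsub (Ioo_subset_Icc_self hx))).mono_of_mem_nhdsWithin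
    (mem_nhdsWithin_of_mem_nhds (Icc_mem_nhds hx.1 (hx.2.trans_le ht.2)))

lemma tendsto_intervalIntegral_of_bounded {F : ℕ → ℝ → ℝ} {f : ℝ → ℝ} {a b C : ℝ}
    (hab : a ≤ b) (hF : ∀ n, ContinuousOn (F n) (Icc a b))
    (hC : ∀ n, ∀ x ∈ Icc a b, |F n x| ≤ C)
    (hlim : ∀ x ∈ Icc a b, Tendsto (F · x) atTop (𝓝 (f x))) :
    Tendsto (fun n => ∫ x in a..b, F n x) atTop (𝓝 (∫ x in a..b, f x)) := by
  have hsub : uIoc a b ⊆ Icc a b := by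
    rw [uIoc_of_le hab]; exact Ioc_subset_Icc_self
  refine intervalIntegral.tendsto_integral_filter_of_dominated_convergence (fun _ => C)
    (Eventually.of_forall fun n => ((hF n).mono hsub).aestronglyMeasurable measurableSet_uIoc)
    (Eventually.of_forall fun n => ae_of_all _ fun x hx => hC n x (hsub hx))
    intervalIntegrable_const (ae_of_all _ fun x hx => hlim x (hsub hx))

namespace IsForcedSolOn

variable {lam θ f0 T : ℝ} {a : ℕ → ℝ → ℝ}

lemma continuousOn (hsol : IsForcedSolOn lam θ f0 T a) (j : ℕ) :
    ContinuousOn (a j) (Icc 0 T) :=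
  fun t ht => (hsol j t ht).continuousWithinAt

lemma continuousOn_energyFlux (hsol : IsForcedSolOn lam θ f0 T a) (N : ℕ) :
    ContinuousOn (fun τ => energyFlux lam θ (fun j => a j τ) N) (Icc 0 T) :=
  (continuousOn_const.mul ((hsol.continuousOn N).pow 2)).mul (hsol.continuousOn (N + 1))

lemma hasDerivWithinAt_sum_sq (hsol : IsForcedSolOn lam θ f0 T a) (N : ℕ) {t : ℝ}
    (ht : t ∈ Icc 0 T) :
    HasDerivWithinAt (fun τ => ∑ j ∈ Finset.range (N + 1), a j τ ^ 2)
      (2 * f0 * a 0 t - 2 * energyFlux lam θ (fun j => a j t) N) (Icc 0 T) t := by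
  refine (HasDerivWithinAt.fun_sum fun j _ => (hsol j t ht).fun_pow 2).congr_deriv
    ((Finset.sum_congr rfl fun j _ => ?_).trans
      (sum_mul_forcedDyadicField lam θ f0 (fun j => a j t) N))
  simp only [forcedDyadicField]
  push_cast
  ring

lemma sum_sq_eq (hsol : IsForcedSolOn lam θ f0 T a) (N : ℕ) {t : ℝ} (ht : t ∈ Icc 0 T) :
    ∑ j ∈ Finset.range (N + 1), a j t ^ 2
      = ∑ j ∈ Finset.range (N + 1), a j 0 ^ 2 + (2 * f0 * ∫ τ in (0 : ℝ)..t, a 0 τ)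
        - 2 * ∫ τ in (0 : ℝ)..t, energyFlux lam θ (fun j => a j τ) N := by
  have hsub : Icc 0 t ⊆ Icc 0 T := Icc_subset_Icc_right ht.2
  have hint₀ : IntervalIntegrable (a 0) volume 0 t :=
    ((hsol.continuousOn 0).mono hsub).intervalIntegrable_of_Icc ht.1
  have hintΦ : IntervalIntegrable (fun τ => energyFlux lam θ (fun j => a j τ) N) volume 0 t :=
    ((hsol.continuousOn_energyFlux N).mono hsub).intervalIntegrable_of_Icc ht.1
  have hftc := integral_eq_sub_of_hasDerivWithinAt_Icc
    (fun x hx => hsol.hasDerivWithinAt_sum_sq N hx)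
    ((hint₀.const_mul _).sub (hintΦ.const_mul _)) ht
  rw [intervalIntegral.integral_sub (hint₀.const_mul _) (hintΦ.const_mul _),
    intervalIntegral.integral_const_mul, intervalIntegral.integral_const_mul] at hftc
  linarith

end IsForcedSolOn

theorem forced_inviscid_energy_equality_general (lam θ f0 T : ℝ) (hlam : 1 < lam)
    (hθ1 : 1 ≤ θ) (a : ℕ → ℝ → ℝ) (hsol : IsForcedSolOn lam θ f0 T a)
    (hreg : (⨆ t ∈ Set.Icc (0 : ℝ) T, Hsq lam (θ / 3) (fun j => a j t)) < ⊤) :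
    ∀ t ∈ Set.Icc (0 : ℝ) T,
      (∑' j : ℕ, (a j t) ^ 2)
        = (∑' j : ℕ, (a j 0) ^ 2) + 2 * f0 * ∫ τ in (0 : ℝ)..t, a 0 τ := by
  intro t ht
  have hlam₀ : 0 < lam := one_pos.trans hlam
  set M := ⨆ τ ∈ Set.Icc (0 : ℝ) T, Hsq lam (θ / 3) (fun j => a j τ)
  have hM : ∀ τ ∈ Icc 0 T, Hsq lam (θ / 3) (fun j => a j τ) ≤ M :=
    le_iSup₂ (f := fun τ (_ : τ ∈ Icc (0 : ℝ) T) => Hsq lam (θ / 3) (fun j => a j τ))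
  have hfin : ∀ τ ∈ Icc 0 T, Hsq lam (θ / 3) (fun j => a j τ) ≠ ⊤ := fun τ hτ =>
    ne_top_of_le_ne_top hreg.ne (hM τ hτ)
  have hB : ∀ τ ∈ Icc 0 T, ∀ j, (lam ^ j) ^ (2 * (θ / 3)) * a j τ ^ 2 ≤ M.toReal :=
    fun τ hτ => Hsq_term_le_toReal hreg.ne (hM τ hτ)
  have hpartial : ∀ τ ∈ Icc 0 T, Tendsto (fun N => ∑ j ∈ Finset.range (N + 1), a j τ ^ 2)
      atTop (𝓝 (∑' j, a j τ ^ 2)) := fun τ hτ =>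
    (summable_sq_of_Hsq_ne_top hlam.le (by linarith) (hfin τ hτ)).tendsto_sum_tsum_nat.comp
      (tendsto_add_atTop_nat 1)
  have hflux : Tendsto (fun N => ∫ τ in (0 : ℝ)..t, energyFlux lam θ (fun j => a j τ) N)
      atTop (𝓝 0) := by
    have hsub : Icc 0 t ⊆ Icc 0 T := Icc_subset_Icc_right ht.2
    simpa using tendsto_intervalIntegral_of_bounded (f := 0)
      (C := lam ^ (2 * (θ / 3)) * √M.toReal * M.toReal) ht.1
      (fun N => (hsol.continuousOn_energyFlux N).mono hsub)
      (fun N τ hτ => (abs_energyFlux_le hlam₀ (hB τ (hsub hτ)) N).trans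
        (by gcongr; exact hB τ (hsub hτ) N))
      (fun τ hτ => tendsto_energyFlux_zero hlam₀ (hB τ (hsub hτ))
        (summable_Hsq_term hlam₀.le (hfin τ (hsub hτ))))
  have hlim := ((hpartial 0 ⟨le_rfl, ht.1.trans ht.2⟩).add_const
    (2 * f0 * ∫ τ in (0 : ℝ)..t, a 0 τ)).sub (hflux.const_mul 2)
  rw [mul_zero, sub_zero] at hlim
  exact tendsto_nhds_unique (hpartial t ht) (hlim.congr fun N => (hsol.sum_sq_eq N ht).symm)

/-- Cheskidov–Friedlander–Pavlović: every regular solution of the forced inviscid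
dyadic model satisfies the energy equality
`Σ_j a_j(t)² = Σ_j a_j(0)² + 2 f₀ ∫₀ᵗ a₀(τ) dτ`. -/
theorem forced_inviscid_energy_equality (lam θ f0 T : ℝ) (hlam : 1 < lam)
    (hθ1 : 1 ≤ θ) (hθ2 : θ ≤ 5 / 2) (hf0 : 0 < f0) (hT : 0 < T)
    (a : ℕ → ℝ → ℝ) (hsol : IsForcedSolOn lam θ f0 T a)
    (hinit : Summable (fun j => (a j 0) ^ 2))
    (hreg : (⨆ t ∈ Set.Icc (0 : ℝ) T, Hsq lam (θ / 3) (fun j => a j t)) < ⊤) :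
    ∀ t ∈ Set.Icc (0 : ℝ) T,
      (∑' j : ℕ, (a j t) ^ 2)
        = (∑' j : ℕ, (a j 0) ^ 2) + 2 * f0 * ∫ τ in (0 : ℝ)..t, a 0 τ :=
  forced_inviscid_energy_equality_general lam θ f0 T hlam hθ1 a hsol hreg
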